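/- arXiv:1507.02230 — 2 statements merged into one kernel-verified Lean document; each statement's English description precedes it below -/
import Mathlib

section
/- Let 1 → G1 → G → G2 → 1 be an exact sequence of groups. If every finite subgroup of G2 has order at most B, and every finite subgroup of G1 contains an abelian subgroup of index at most J, then every finite subgroup of G contains an abelian subgroup of index at most B·J. -/
/-!
For a finite `K ≤ G`, the kernel part `g.ker ⊓ K` is a finite subgroup of `f.range ≅ G1`, so it
has an abelian subgroup of index at most `J`; its own index in `K` is `|g(K)| ≤ B`, and indices
multiply.
-/

namespace Subgroup

variable {G G' : Type*} [Group G] [Group G']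

def HasCommSubgroupOfRelIndexLE (K : Subgroup G) (n : ℕ) : Prop :=
  ∃ A : Subgroup G, A ≤ K ∧ (∀ a ∈ A, ∀ b ∈ A, a * b = b * a) ∧ A.relIndex K ≤ n

theorem HasCommSubgroupOfRelIndexLE.map {f : G →* G'} (hf : Function.Injective f)
    {H : Subgroup G} {n : ℕ} (hH : H.HasCommSubgroupOfRelIndexLE n) :
    (H.map f).HasCommSubgroupOfRelIndexLE n := by
  obtain ⟨A, hAH, hA, hAn⟩ := hH
  refine ⟨A.map f, map_mono hAH, ?_, by rwa [relIndex_map_map_of_injective _ _ hf]⟩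
  rintro _ ⟨a, ha, rfl⟩ _ ⟨b, hb, rfl⟩
  rw [← map_mul, ← map_mul, hA a ha b hb]

theorem HasCommSubgroupOfRelIndexLE.of_le {N K : Subgroup G} {m n : ℕ}
    (hN : N.HasCommSubgroupOfRelIndexLE n) (hNK : N ≤ K) (hm : N.relIndex K ≤ m) :
    K.HasCommSubgroupOfRelIndexLE (m * n) := by
  obtain ⟨A, hAN, hA, hAn⟩ := hN
  refine ⟨A, hAN.trans hNK, hA, ?_⟩
  rw [← relIndex_mul_relIndex _ _ _ hAN hNK, mul_comm]
  exact Nat.mul_le_mul hm hAn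

theorem hasCommSubgroupOfRelIndexLE_of_le_range {f : G →* G'} (hf : Function.Injective f)
    {N : Subgroup G'} [Finite N] (hN : N ≤ f.range) {n : ℕ}
    (h : ∀ H : Subgroup G, Finite H → H.HasCommSubgroupOfRelIndexLE n) :
    N.HasCommSubgroupOfRelIndexLE n := by
  have : Finite (N.comap f) :=
    Finite.of_injective (fun x : N.comap f => (⟨f x, x.2⟩ : N)) fun x y hxy =>
      Subtype.ext (hf (congrArg Subtype.val hxy))
  simpa only [map_comap_eq_self hN] using ((h _ this).map hf)

theorem relIndex_ker_inf_le (g : G →* G') (K : Subgroup G) [Finite K] {B : ℕ}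
    (hB : ∀ L : Subgroup G', Finite L → Nat.card L ≤ B) : (g.ker ⊓ K).relIndex K ≤ B := by
  rw [inf_relIndex_right, relIndex_ker]
  exact hB _ (Finite.of_surjective _ (g.subgroupMap_surjective K))

end Subgroup

open Subgroup in
theorem stmt1_general {G1 G G2 : Type*} [Group G1] [Group G] [Group G2]
    (f : G1 →* G) (g : G →* G2)
    (hf : Function.Injective f) (hexact : f.range = g.ker)
    (B J : ℕ)
    (hB : ∀ K : Subgroup G2, Finite ↥K → Nat.card ↥K ≤ B)
    (hJ : ∀ K : Subgroup G1, Finite ↥K → ∃ A : Subgroup G1, A ≤ K ∧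
      (∀ a ∈ A, ∀ b ∈ A, a * b = b * a) ∧ A.relIndex K ≤ J) :
    ∀ K : Subgroup G, Finite ↥K → ∃ A : Subgroup G, A ≤ K ∧
      (∀ a ∈ A, ∀ b ∈ A, a * b = b * a) ∧ A.relIndex K ≤ B * J := by
  intro K hK
  have : Finite ↥(g.ker ⊓ K) := Finite.of_injective _ (inclusion_injective inf_le_right)
  have hN : (g.ker ⊓ K).HasCommSubgroupOfRelIndexLE J :=
    hasCommSubgroupOfRelIndexLE_of_le_range hf (hexact ▸ inf_le_left) hJ
  exact hN.of_le inf_le_right (relIndex_ker_inf_le g K hB)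

/-- Given an exact sequence 1 → G1 → G → G2 → 1: if every finite subgroup of `G2`
has order at most `B`, and every finite subgroup of `G1` contains an abelian subgroup
of index at most `J`, then every finite subgroup of `G` contains an abelian subgroup
of index at most `B * J`. -/
theorem stmt1 {G1 G G2 : Type*} [Group G1] [Group G] [Group G2]
    (f : G1 →* G) (g : G →* G2)
    (hf : Function.Injective f) (hg : Function.Surjective g) (hexact : f.range = g.ker)
    (B J : ℕ)
    (hB : ∀ K : Subgroup G2, Finite ↥K → Nat.card ↥K ≤ B)
    (hJ : ∀ K : Subgroup G1, Finite ↥K → ∃ A : Subgroup G1, A ≤ K ∧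
      (∀ a ∈ A, ∀ b ∈ A, a * b = b * a) ∧ A.relIndex K ≤ J) :
    ∀ K : Subgroup G, Finite ↥K → ∃ A : Subgroup G, A ≤ K ∧
      (∀ a ∈ A, ∀ b ∈ A, a * b = b * a) ∧ A.relIndex K ≤ B * J :=
  stmt1_general f g hf hexact B J hB hJ
end

section
/- Let 1 → G1 → G → G2 → 1 be an exact sequence of groups. Then Rk_f(G) ≤ Rk_f(G1) + Rk_f(G2), where Rk_f(G) is the supremum over all finite abelian subgroups A ≤ G of the minimal number of generators of A. -/
/-- Given an exact sequence 1 → G1 → G → G2 → 1, if every finite abelian subgroup of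
`G1` is generated by at most `R1` elements and every finite abelian subgroup of `G2`
is generated by at most `R2` elements, then every finite abelian subgroup of `G` is
generated by at most `R1 + R2` elements; that is, `Rk_f(G) ≤ Rk_f(G1) + Rk_f(G2)`. -/
theorem stmt5 {G1 G G2 : Type*} [Group G1] [Group G] [Group G2]
    (f : G1 →* G) (g : G →* G2)
    (hf : Function.Injective f) (hg : Function.Surjective g) (hexact : f.range = g.ker)
    (R1 R2 : ℕ)
    (h1 : ∀ A : Subgroup G1, Finite ↥A → (∀ a ∈ A, ∀ b ∈ A, a * b = b * a) →
      ∃ S : Finset G1, ↑S ⊆ (A : Set G1) ∧ S.card ≤ R1 ∧ Subgroup.closure ↑S = A)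
    (h2 : ∀ A : Subgroup G2, Finite ↥A → (∀ a ∈ A, ∀ b ∈ A, a * b = b * a) →
      ∃ S : Finset G2, ↑S ⊆ (A : Set G2) ∧ S.card ≤ R2 ∧ Subgroup.closure ↑S = A) :
    ∀ A : Subgroup G, Finite ↥A → (∀ a ∈ A, ∀ b ∈ A, a * b = b * a) →
      ∃ S : Finset G, ↑S ⊆ (A : Set G) ∧ S.card ≤ R1 + R2 ∧ Subgroup.closure ↑S = A := by
  classical
  intro A hAfin hAcomm
  set A1 : Subgroup G1 := A.comap f with hA1def
  have hA1fin : Finite ↥A1 := by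
    have hinj : Function.Injective (fun x : ↥A1 => (⟨f x, x.2⟩ : ↥A)) := by
      intro x y h
      exact Subtype.ext (hf (by simpa using congrArg Subtype.val h))
    exact Finite.of_injective _ hinj
  have hA1comm : ∀ a ∈ A1, ∀ b ∈ A1, a * b = b * a := by
    intro a ha b hb
    apply hf
    simp only [map_mul]
    exact hAcomm _ ha _ hb
  obtain ⟨S1, hS1sub, hS1card, hS1cl⟩ := h1 A1 hA1fin hA1comm
  set A2 : Subgroup G2 := A.map g with hA2def
  have hA2fin : Finite ↥A2 := by
    have : ((A : Set G).image g).Finite := ((A : Set G).toFinite).image g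
    have h2' : (A2 : Set G2) = (A : Set G).image g := by
      simp [hA2def, Subgroup.coe_map]
    rw [show (↥A2) = ↥(A2 : Set G2) from rfl, h2']
    exact this.to_subtype
  have hA2comm : ∀ a ∈ A2, ∀ b ∈ A2, a * b = b * a := by
    rintro a ⟨x, hx, rfl⟩ b ⟨y, hy, rfl⟩
    rw [← map_mul, ← map_mul, hAcomm x hx y hy]
  obtain ⟨S2, hS2sub, hS2card, hS2cl⟩ := h2 A2 hA2fin hA2comm
  -- choice of lifts
  have hlift : ∀ s ∈ S2, ∃ x ∈ A, g x = s := by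
    intro s hs
    exact Subgroup.mem_map.mp (hS2sub hs)
  set ψ : G2 → G := fun s => if h : ∃ x ∈ A, g x = s then h.choose else 1 with hψdef
  have hψA : ∀ s ∈ S2, ψ s ∈ A := by
    intro s hs
    have h := hlift s hs
    simp only [hψdef, dif_pos h]
    exact h.choose_spec.1
  have hψg : ∀ s ∈ S2, g (ψ s) = s := by
    intro s hs
    have h := hlift s hs
    simp only [hψdef, dif_pos h]
    exact h.choose_spec.2
  refine ⟨S1.image f ∪ S2.image ψ, ?_, ?_, ?_⟩
  · intro x hx
    simp only [Finset.coe_union, Set.mem_union, Finset.coe_image, Set.mem_image] at hx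
    rcases hx with ⟨y, hy, rfl⟩ | ⟨y, hy, rfl⟩
    · exact hS1sub hy
    · exact hψA y hy
  · calc (S1.image f ∪ S2.image ψ).card ≤ (S1.image f).card + (S2.image ψ).card :=
          Finset.card_union_le _ _
      _ ≤ S1.card + S2.card := Nat.add_le_add (Finset.card_image_le) (Finset.card_image_le)
      _ ≤ R1 + R2 := Nat.add_le_add hS1card hS2card
  · apply le_antisymm
    · rw [Subgroup.closure_le]
      intro x hx
      simp only [Finset.coe_union, Set.mem_union, Finset.coe_image, Set.mem_image] at hx
      rcases hx with ⟨y, hy, rfl⟩ | ⟨y, hy, rfl⟩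
      · exact hS1sub hy
      · exact hψA y hy
    · intro a ha
      set H : Subgroup G := Subgroup.closure ↑(S1.image f ∪ S2.image ψ) with hHdef
      have hsub2 : (↑(S2.image ψ) : Set G) ⊆ H :=
        Set.Subset.trans (by simp [Finset.coe_union]) Subgroup.subset_closure
      have hsub1 : (↑(S1.image f) : Set G) ⊆ H :=
        Set.Subset.trans (by simp [Finset.coe_union]) Subgroup.subset_closure
      -- g a lies in image of H
      have hga : g a ∈ H.map g := by
        have h1' : A2 ≤ H.map g := by
          rw [← hS2cl, Subgroup.closure_le]
          intro s hs
          exact ⟨ψ s, hsub2 (by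
            simp only [Finset.coe_image, Set.mem_image]; exact ⟨s, hs, rfl⟩), hψg s hs⟩
        exact h1' ⟨a, ha, rfl⟩
      obtain ⟨h, hhH, hgh⟩ := Subgroup.mem_map.mp hga
      have hhA : h ∈ A := by
        have : H ≤ A := by
          rw [hHdef, Subgroup.closure_le]
          intro x hx
          simp only [Finset.coe_union, Set.mem_union, Finset.coe_image, Set.mem_image] at hx
          rcases hx with ⟨y, hy, rfl⟩ | ⟨y, hy, rfl⟩
          · exact hS1sub hy
          · exact hψA y hy
        exact this hhH
      have hker : a * h⁻¹ ∈ g.ker := by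
        rw [MonoidHom.mem_ker, map_mul, map_inv, hgh, mul_inv_cancel]
      rw [← hexact] at hker
      obtain ⟨x, hx⟩ := hker
      have hxA1 : x ∈ A1 := by
        simp only [hA1def, Subgroup.mem_comap, hx]
        exact A.mul_mem ha (A.inv_mem hhA)
      have hfx : f x ∈ H := by
        have : f x ∈ (Subgroup.closure (↑S1 : Set G1)).map f := ⟨x, hS1cl ▸ hxA1, rfl⟩
        rw [MonoidHom.map_closure] at this
        refine Subgroup.closure_le (K := H) |>.mpr ?_ this
        intro y hy
        obtain ⟨z, hz, rfl⟩ := hy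
        exact hsub1 (by simp only [Finset.coe_image, Set.mem_image]; exact ⟨z, hz, rfl⟩)
      have : a = f x * h := by rw [hx]; group
      rw [this]
      exact H.mul_mem hfx hhH
end
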